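/- In the Δ^p_2-hardness construction, let φ be a satisfiable propositional formula over x_1,…,x_n and let (M'',w'') = (M,w0) ⊗ (E_1,e_1) ⊗ … ⊗ (E_n,e_n) ⊗ (E'_1,e'_1) ⊗ … ⊗ (E'_n,e'_n). Then w'' makes z true and all of x_1,…,x_n false, and every world of M'' that makes z false agrees on x_1,…,x_n with the lexicographically maximal truth assignment satisfying φ. -/

import Mathlib

namespace DELMC

inductive DForm (Agent : Type) : Type
  | atom : ℕ → DForm Agent
  | neg : DForm Agent → DForm Agent
  | and : DForm Agent → DForm Agent → DForm Agent
  | K : Agent → DForm Agent → DForm Agent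
  | upd : (k : ℕ) → (Agent → Fin (k+1) → Fin (k+1) → Bool) →
      (Fin (k+1) → DForm Agent) → (Fin (k+1) → List (ℕ × Bool)) →
      (Fin (k+1) → Bool) → DForm Agent → DForm Agent

structure EpiModel (Agent : Type) where
  World : Type
  rel : Agent → World → World → Prop
  val : World → ℕ → Prop

def postEval (l : List (ℕ × Bool)) (p : ℕ) : Option Bool :=
  (l.find? (fun q => q.1 == p)).map Prod.snd

def updModel {Agent : Type} (M : EpiModel Agent) (k : ℕ)
    (S : Agent → Fin (k+1) → Fin (k+1) → Bool)
    (dom : M.World → Fin (k+1) → Prop)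
    (post : Fin (k+1) → List (ℕ × Bool)) : EpiModel Agent where
  World := { p : M.World × Fin (k+1) // dom p.1 p.2 }
  rel a u v := M.rel a u.1.1 v.1.1 ∧ S a u.1.2 v.1.2 = true
  val u p :=
    match postEval (post u.1.2) p with
    | some b => b = true
    | none => M.val u.1.1 p

def Sat {Agent : Type} : (M : EpiModel Agent) → M.World → DForm Agent → Prop
  | M, w, .atom p => M.val w p
  | M, w, .neg φ => ¬ Sat M w φ
  | M, w, .and φ ψ => Sat M w φ ∧ Sat M w ψ
  | M, w, .K a φ => ∀ v, M.rel a w v → Sat M v φ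
  | M, w, .upd k S pre post des φ =>
      ∀ e, des e = true → ∀ h : Sat M w (pre e),
        Sat (updModel M k S (fun v e' => Sat M v (pre e')) post) ⟨(w, e), h⟩ φ

/-- `K̂_a φ := ¬ K_a ¬ φ`. -/
def khat {Agent : Type} (a : Agent) (φ : DForm Agent) : DForm Agent := .neg (.K a (.neg φ))

/-- The formula `⊤` (as the abbreviation `¬(p ∧ ¬p)`). -/
def dtop {Agent : Type} : DForm Agent := .neg (.and (.atom 0) (.neg (.atom 0)))

/-- Implication `φ → ψ`, as the abbreviation `¬(φ ∧ ¬ψ)`. -/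
def dimp {Agent : Type} (φ ψ : DForm Agent) : DForm Agent := .neg (.and φ (.neg ψ))

/-- Conjunction of a list of formulas. -/
def bigAnd {Agent : Type} : List (DForm Agent) → DForm Agent
  | [] => dtop
  | [φ] => φ
  | φ :: rest => .and φ (bigAnd rest)

/-- An epistemic model is S5 if all relations are equivalence relations. -/
def EpiModel.IsS5 {Agent : Type} (M : EpiModel Agent) : Prop := ∀ a, Equivalence (M.rel a)

/-- A list of literals contains no complementary pair. -/
def NoComplPair (l : List (ℕ × Bool)) : Prop := ∀ p : ℕ, ¬ ((p, true) ∈ l ∧ (p, false) ∈ l)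

/-- All update modalities in the formula use S5 event models (with no constraint on
designated events or postconditions beyond non-complementarity). -/
def DForm.updsS5 {Agent : Type} : DForm Agent → Prop
  | .atom _ => True
  | .neg φ => φ.updsS5
  | .and φ ψ => φ.updsS5 ∧ ψ.updsS5
  | .K _ φ => φ.updsS5
  | .upd _ S pre post _ φ =>
      (∀ a, Equivalence (fun i j => S a i j = true)) ∧
      (∀ e, NoComplPair (post e)) ∧ (∀ e, (pre e).updsS5) ∧ φ.updsS5

/-- All update modalities are single-pointed (exactly one designated event). -/
def DForm.updsSingle {Agent : Type} : DForm Agent → Prop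
  | .atom _ => True
  | .neg φ => φ.updsSingle
  | .and φ ψ => φ.updsSingle ∧ ψ.updsSingle
  | .K _ φ => φ.updsSingle
  | .upd _ _ pre _ des φ =>
      (∃! e, des e = true) ∧ (∀ e, (pre e).updsSingle) ∧ φ.updsSingle

/-- All update modalities have empty postconditions. -/
def DForm.updsNoPost {Agent : Type} : DForm Agent → Prop
  | .atom _ => True
  | .neg φ => φ.updsNoPost
  | .and φ ψ => φ.updsNoPost ∧ ψ.updsNoPost
  | .K _ φ => φ.updsNoPost
  | .upd _ _ pre post _ φ =>
      (∀ e, post e = []) ∧ (∀ e, (pre e).updsNoPost) ∧ φ.updsNoPost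

/-- The formula contains no update modalities (it is a formula of basic epistemic logic). -/
def DForm.noUpd {Agent : Type} : DForm Agent → Prop
  | .atom _ => True
  | .neg φ => φ.noUpd
  | .and φ ψ => φ.noUpd ∧ ψ.noUpd
  | .K _ φ => φ.noUpd
  | .upd _ _ _ _ _ _ => False

/-- All propositional variables occurring in the formula belong to `s`. -/
def DForm.atomsSub {Agent : Type} (s : Set ℕ) : DForm Agent → Prop
  | .atom p => p ∈ s
  | .neg φ => φ.atomsSub s
  | .and φ ψ => φ.atomsSub s ∧ ψ.atomsSub s
  | .K _ φ => φ.atomsSub s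
  | .upd _ _ pre post _ φ =>
      (∀ e, (pre e).atomsSub s) ∧ (∀ e q, q ∈ post e → q.1 ∈ s) ∧ φ.atomsSub s

/-- Event models (with events `Fin (k+1)`, hence finite and nonempty). -/
structure EvtModel (Agent : Type) where
  k : ℕ
  S : Agent → Fin (k+1) → Fin (k+1) → Bool
  pre : Fin (k+1) → DForm Agent
  post : Fin (k+1) → List (ℕ × Bool)

def EvtModel.IsS5 {Agent : Type} (E : EvtModel Agent) : Prop :=
  ∀ a, Equivalence (fun i j => E.S a i j = true)

def EvtModel.NoPost {Agent : Type} (E : EvtModel Agent) : Prop := ∀ e, E.post e = []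

/-- The product update `M ⊗ E` of an epistemic model with an event model. -/
def EpiModel.update {Agent : Type} (M : EpiModel Agent) (E : EvtModel Agent) : EpiModel Agent :=
  updModel M E.k E.S (fun w e => Sat M w (E.pre e)) E.post

/-- The single-pointed update modality `[E, d]φ` as a formula. -/
def updSingle {Agent : Type} (E : EvtModel Agent) (d : Fin (E.k+1)) (φ : DForm Agent) :
    DForm Agent :=
  .upd E.k E.S E.pre E.post (fun e => decide (e = d)) φ

/-- The multi-pointed update modality `[E, E_d]φ` with all events designated. -/
def updAll {Agent : Type} (E : EvtModel Agent) (φ : DForm Agent) : DForm Agent :=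
  .upd E.k E.S E.pre E.post (fun _ => true) φ

/-- The submodel of `M` induced by the set `U` of worlds. -/
def EpiModel.restrict {Agent : Type} (M : EpiModel Agent) (U : M.World → Prop) :
    EpiModel Agent where
  World := {w : M.World // U w}
  rel a u v := M.rel a u.1 v.1
  val u p := M.val u.1 p

/-- `Z` is a bisimulation between the models `M` and `N`. -/
def IsBisim {Agent : Type} (M N : EpiModel Agent) (Z : M.World → N.World → Prop) : Prop :=
  ∀ u u', Z u u' →
    (∀ p, M.val u p ↔ N.val u' p) ∧
    (∀ a v, M.rel a u v → ∃ v', N.rel a u' v' ∧ Z v v') ∧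
    (∀ a v', N.rel a u' v' → ∃ v, M.rel a u v ∧ Z v v')

/-- The pointed models `(M, w)` and `(N, v)` are bisimilar. -/
def Bisimilar {Agent : Type} (M : EpiModel Agent) (w : M.World)
    (N : EpiModel Agent) (v : N.World) : Prop :=
  ∃ Z, IsBisim M N Z ∧ Z w v

/-- Quantifier-free propositional formulas. -/
inductive PropForm : Type
  | atom : ℕ → PropForm
  | neg : PropForm → PropForm
  | and : PropForm → PropForm → PropForm

def PropForm.eval (α : ℕ → Bool) : PropForm → Bool
  | .atom p => α p
  | .neg φ => !(φ.eval α)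
  | .and φ ψ => φ.eval α && ψ.eval α

def PropForm.atomsSub (s : Set ℕ) : PropForm → Prop
  | .atom p => p ∈ s
  | .neg φ => φ.atomsSub s
  | .and φ ψ => φ.atomsSub s ∧ ψ.atomsSub s

/-- `β` is lexicographically larger than `α` w.r.t. the ordering `x_1 ≺ … ≺ x_n`
(variable `x_i` is the propositional variable `i`). -/
def LexGT (n : ℕ) (β α : ℕ → Bool) : Prop :=
  ∃ i, 1 ≤ i ∧ i ≤ n ∧ β i = true ∧ α i = false ∧ ∀ j, 1 ≤ j → j < i → β j = α j

/-- `α` is the lexicographically maximal assignment satisfying `ψ` (w.r.t. `x_1 ≺ … ≺ x_n`). -/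
def IsLexMaxSat (n : ℕ) (ψ : PropForm) (α : ℕ → Bool) : Prop :=
  ψ.eval α = true ∧ ∀ β, ψ.eval β = true → ¬ LexGT n β α

/-- Truth of the partially quantified Boolean formula `Q_i x_i … Q_n x_n. ψ` under an
assignment, where `Q_j = ∃` for odd `j` and `Q_j = ∀` for even `j`; the first argument is
the number of remaining quantifiers (i.e. `n + 1 - i`), the second is the index `i`. -/
def QBFAux (ψ : PropForm) : ℕ → ℕ → (ℕ → Bool) → Prop
  | 0, _, α => ψ.eval α = true
  | m+1, i, α =>
    if i % 2 = 1 then ∃ b, QBFAux ψ m (i+1) (Function.update α i b)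
    else ∀ b, QBFAux ψ m (i+1) (Function.update α i b)

/-- Truth of the quantified Boolean formula `∃x_1 ∀x_2 … Q_n x_n. ψ`. -/
def QBFTrue (n : ℕ) (ψ : PropForm) : Prop := QBFAux ψ n 1 (fun _ => false)

/-- Concrete finite epistemic models, suitable as inputs of algorithms. -/
structure FinModel (Agent : Type) where
  m : ℕ
  rel : Agent → Fin (m+1) → Fin (m+1) → Bool
  val : Fin (m+1) → List ℕ

def FinModel.toEpi {Agent : Type} (M : FinModel Agent) : EpiModel Agent where
  World := Fin (M.m+1)
  rel a u v := M.rel a u v = true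
  val w p := p ∈ M.val w

def FinModel.IsS5 {Agent : Type} (M : FinModel Agent) : Prop :=
  ∀ a, Equivalence (fun u v => M.rel a u v = true)


/-! ### The Δ₂ᵖ-hardness construction (single agent, postconditions).
Variable `z` is the propositional variable `0`; variable `x_i` is `i`. -/

/-- The embedding of propositional formulas into the (dynamic) epistemic language. -/
def PropForm.toDForm {Agent : Type} : PropForm → DForm Agent
  | .atom p => .atom p
  | .neg φ => .neg φ.toDForm
  | .and φ ψ => .and φ.toDForm ψ.toDForm

/-- The initial model of the Δ₂ᵖ-hardness construction: worlds `w₀ = 0` (making exactly `z`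
true) and `w₁ = 1` (making everything false), fully `a`-related. -/
def deltaM : EpiModel Unit where
  World := Fin 2
  rel _ _ _ := True
  val w p := w = 0 ∧ p = 0

def deltaW0 : deltaM.World := (0 : Fin 2)

/-- The event model `(E_i, e_i)`: three mutually related events; designated event `0` with
precondition `z`; event `1` with precondition `¬z` and postcondition `{x_i}`; event `2`
with precondition `¬z` and empty postcondition. -/
def deltaE (i : ℕ) : EvtModel Unit where
  k := 2
  S _ _ _ := true
  pre e := if e = 0 then .atom 0 else .neg (.atom 0)
  post e := if e = 1 then [(i, true)] else []

/-- The event model `(E'_i, e'_i)`: designated event `0` with precondition `z`; event `1`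
with precondition `¬z ∧ K̂_a(x_i ∧ φ)` and postcondition `{x_i}`; event `2` with
precondition `¬z ∧ ¬K̂_a(x_i ∧ φ)` and postcondition `{¬x_i}`. -/
def deltaE' (i : ℕ) (ψ : PropForm) : EvtModel Unit where
  k := 2
  S _ _ _ := true
  pre e :=
    if e = 0 then .atom 0
    else if e = 1 then .and (.neg (.atom 0)) (khat () (.and (.atom i) ψ.toDForm))
    else .and (.neg (.atom 0)) (.neg (khat () (.and (.atom i) ψ.toDForm)))
  post e := if e = 1 then [(i, true)] else if e = 2 then [(i, false)] else []

/-- The formula `χ = [E_1,e_1]…[E_n,e_n][E'_1,e'_1]…[E'_n,e'_n] K̂_a x_n`. -/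
def deltaChi (n : ℕ) (ψ : PropForm) : DForm Unit :=
  ((List.range n).map (fun j => deltaE (j+1))).foldr (fun E acc => updSingle E 0 acc)
    (((List.range n).map (fun j => deltaE' (j+1) ψ)).foldr (fun E acc => updSingle E 0 acc)
      (khat () (.atom n)))

/-- The model `M' = M ⊗ E_1 ⊗ … ⊗ E_n`. -/
def deltaM' (n : ℕ) : EpiModel Unit :=
  (((List.range n).map (fun j => deltaE (j+1))).foldl EpiModel.update deltaM)

/-- The model `M'' = M ⊗ E_1 ⊗ … ⊗ E_n ⊗ E'_1 ⊗ … ⊗ E'_n`. -/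
def deltaM'' (n : ℕ) (ψ : PropForm) : EpiModel Unit :=
  (((List.range n).map (fun j => deltaE' (j+1) ψ)).foldl EpiModel.update (deltaM' n))

/-! ### The single-agent multi-pointed PSPACE-hardness construction.
Variable `x_i` is the propositional variable `i`. -/

/-- The group of worlds corresponding to a truth assignment `α`: a world `none` making
no variable true and, for each `j` with `α x_j = 1`, a world `some j` making exactly `x_j`
true; all worlds mutually `a`-related. -/
def groupModel1 (n : ℕ) (α : ℕ → Bool) : EpiModel Unit where
  World := {o : Option (Fin n) // ∀ j : Fin n, o = some j → α (j.1+1) = true}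
  rel _ _ _ := True
  val w p := ∃ j : Fin n, w.1 = some j ∧ p = j.1 + 1

/-- The designated world of the group of worlds corresponding to `α`. -/
def groupW0 (n : ℕ) (α : ℕ → Bool) : (groupModel1 n α).World :=
  ⟨none, fun _ h => nomatch h⟩

/-- The multi-pointed event model `(E_i, E_i)`: two events, both designated, with
preconditions `⊤` and `¬x_i`, empty postconditions, and only reflexive relations. -/
def qEvt (i : ℕ) : EvtModel Unit where
  k := 1
  S _ e f := decide (e = f)
  pre e := if e = 0 then dtop else .neg (.atom i)
  post _ := []

/-- `χ'`: the result of replacing every variable `x_i` in `ψ` by `K̂_a x_i`. -/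
def propKhat : PropForm → DForm Unit
  | .atom p => khat () (.atom p)
  | .neg φ => .neg (propKhat φ)
  | .and φ ψ => .and (propKhat φ) (propKhat ψ)

/-- `qChiAux ψ' m i` is the formula `⟨E_i,E_i⟩[E_{i+1},E_{i+1}]…ψ'` (`m` operators,
diamond at odd indices, box at even indices). -/
def qChiAux (ψ' : DForm Unit) : ℕ → ℕ → DForm Unit
  | 0, _ => ψ'
  | m+1, i =>
    if i % 2 = 1 then .neg (updAll (qEvt i) (.neg (qChiAux ψ' m (i+1))))
    else updAll (qEvt i) (qChiAux ψ' m (i+1))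

/-- The formula `χ = ⟨E_1,E_1⟩[E_2,E_2]…⟨E_{n-1},E_{n-1}⟩[E_n,E_n]χ'`. -/
def qChi (n : ℕ) (ψ : PropForm) : DForm Unit := qChiAux (propKhat ψ) n 1


/-! ### The two-agent PSPACE-hardness construction.
Agents: `a = 0`, `b = 1` (of type `Fin 2`). Propositional variables: `z_0 = 0`,
`z_1 = 1`, `z_2 = 2`. Variable `x_j` of the QBF corresponds to the z1-chain of length `j`. -/

/-- The underlying worlds of a group of worlds, possibly together with z2-chains:
the central world, the worlds `z1 j k` (position `k` in the z1-chain of length `j+1`,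
which represents the variable `x_{j+1}`), and the worlds `z2 i k` (position `k` in the
z2-chain of length `i+1`). -/
inductive GWBase (n m : ℕ) : Type
  | central : GWBase n m
  | z1 : (j : Fin n) → Fin (j.1+2) → GWBase n m
  | z2 : (i : Fin m) → Fin (i.1+2) → GWBase n m

/-- Membership in the `a`-clique: the central world and the first worlds of z1-chains. -/
def aClique {n m : ℕ} : GWBase n m → Prop
  | .central => True
  | .z1 _ k => k.1 = 0
  | .z2 _ _ => False

/-- Membership in the `b`-clique: the central world and the first worlds of z2-chains. -/
def bClique {n m : ℕ} : GWBase n m → Prop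
  | .central => True
  | .z1 _ _ => False
  | .z2 _ k => k.1 = 0

/-- Chain edges: consecutive positions of a z1-chain are related alternately by
`b`, `a`, `b`, … (starting with `b`), and those of a z2-chain alternately by
`a`, `b`, `a`, … (starting with `a`). -/
def chainEdge {n m : ℕ} (ag : Fin 2) : GWBase n m → GWBase n m → Prop
  | .z1 j k, .z1 j' k' =>
      j.1 = j'.1 ∧ ((k'.1 = k.1 + 1 ∧ ag = (if k.1 % 2 = 0 then 1 else 0)) ∨
        (k.1 = k'.1 + 1 ∧ ag = (if k'.1 % 2 = 0 then 1 else 0)))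
  | .z2 i k, .z2 i' k' =>
      i.1 = i'.1 ∧ ((k'.1 = k.1 + 1 ∧ ag = (if k.1 % 2 = 0 then 0 else 1)) ∨
        (k.1 = k'.1 + 1 ∧ ag = (if k'.1 % 2 = 0 then 0 else 1)))
  | _, _ => False

/-- The accessibility relations on `GWBase n m`. -/
def gwRel {n m : ℕ} (ag : Fin 2) (u v : GWBase n m) : Prop :=
  u = v ∨ (ag = 0 ∧ aClique u ∧ aClique v) ∨ (ag = 1 ∧ bClique u ∧ bClique v) ∨
    chainEdge ag u v

/-- The valuation on `GWBase n m`: the central world makes exactly `z_1` and `z_2` true,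
the first world of a chain makes exactly `z_1` (resp. `z_2`) true, the last world of a
chain makes exactly `z_0` true, and all other worlds make no variable true. -/
def gwVal {n m : ℕ} : GWBase n m → ℕ → Prop
  | .central, p => p = 1 ∨ p = 2
  | .z1 j k, p => (k.1 = 0 ∧ p = 1) ∨ (k.1 = j.1 + 1 ∧ p = 0)
  | .z2 i k, p => (k.1 = 0 ∧ p = 2) ∨ (k.1 = i.1 + 1 ∧ p = 0)

/-- The group of worlds representing the truth assignment `α` to `x_1, …, x_n`
(containing a z1-chain of length `j` exactly when `α x_j = 1`), together with
z2-chains of lengths `1, …, m`. -/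
def groupModel2 (n m : ℕ) (α : ℕ → Bool) : EpiModel (Fin 2) where
  World := {u : GWBase n m // ∀ (j : Fin n) (k : Fin (j.1+2)), u = GWBase.z1 j k → α (j.1+1) = true}
  rel ag u v := gwRel ag u.1 v.1
  val u p := gwVal u.1 p

/-- The central (designated) world of `groupModel2 n m α`. -/
def central2 (n m : ℕ) (α : ℕ → Bool) : (groupModel2 n m α).World :=
  ⟨.central, fun _ _ h => nomatch h⟩

/-- The pair of formulas `(χ^a_j, χ^b_j)`. -/
def chiAB : ℕ → DForm (Fin 2) × DForm (Fin 2)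
  | 0 => (.atom 0, .atom 0)
  | j+1 =>
    (khat 0 (.and (.neg (.atom 1)) (.and (.neg (.atom 2)) (chiAB j).2)),
     khat 1 (.and (.neg (.atom 1)) (.and (.neg (.atom 2)) (chiAB j).1)))

def chiA (j : ℕ) : DForm (Fin 2) := (chiAB j).1
def chiB (j : ℕ) : DForm (Fin 2) := (chiAB j).2

/-- `χ_j = z_1 ∧ ¬z_2 ∧ χ^b_j ∧ ¬χ^b_{j-1}` (for `j ≥ 1`). -/
def chiX (j : ℕ) : DForm (Fin 2) :=
  .and (.atom 1) (.and (.neg (.atom 2)) (.and (chiB j) (.neg (chiB (j-1)))))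

/-- `χ'_j = ¬z_1 ∧ z_2 ∧ χ^a_j ∧ ¬χ^a_{j-1}` (for `j ≥ 1`). -/
def chiX' (j : ℕ) : DForm (Fin 2) :=
  .and (.neg (.atom 1)) (.and (.atom 2) (.and (chiA j) (.neg (chiA (j-1)))))

/-- The event model `(E_i, e_i)` of the two-agent construction: events `f^1_i, …, f^5_i`
are `0, …, 4`; `{0,1,2}` is a `b`-clique; `1 S_a 3` and `2 S_a 4`; preconditions
`⊤, ⊤, ⊤, ¬χ'_i, ¬χ'_i ∧ ¬χ_i`; empty postconditions; designated event `0`. -/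
def twoEvt (i : ℕ) : EvtModel (Fin 2) where
  k := 4
  S ag e f := decide (e = f) ||
    (if ag = 1 then decide (e.1 ≤ 2 ∧ f.1 ≤ 2)
     else decide ((e.1 = 1 ∧ f.1 = 3) ∨ (e.1 = 3 ∧ f.1 = 1) ∨
       (e.1 = 2 ∧ f.1 = 4) ∨ (e.1 = 4 ∧ f.1 = 2)))
  pre e :=
    if e.1 ≤ 2 then dtop
    else if e.1 = 3 then .neg (chiX' i)
    else .and (.neg (chiX' i)) (.neg (chiX i))
  post _ := []

/-- The conjunction `⋀_{1 ≤ j ≤ i} ¬K̂_b χ'_j`. -/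
def negConj (i : ℕ) : DForm (Fin 2) :=
  bigAnd ((List.range i).map (fun t => .neg (khat 1 (chiX' (t+1)))))

/-- The conjunction `⋀_{i < j ≤ n} K̂_b χ'_j`. -/
def posConj (n i : ℕ) : DForm (Fin 2) :=
  bigAnd ((List.range (n-i)).map (fun t => khat 1 (chiX' (i+1+t))))

/-- The formula `z_1 ∧ z_2 ∧ ⋀_{1≤j≤i} ¬K̂_b χ'_j ∧ ⋀_{i<j≤n} K̂_b χ'_j`. -/
def xiBody (n i : ℕ) : DForm (Fin 2) :=
  .and (.atom 1) (.and (.atom 2) (.and (negConj i) (posConj n i)))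

/-- `ψ'`: the result of replacing every variable `x_i` in `ψ` by `K̂_a χ_i`. -/
def propToXi : PropForm → DForm (Fin 2)
  | .atom p => khat 0 (chiX p)
  | .neg φ => .neg (propToXi φ)
  | .and φ ψ => .and (propToXi φ) (propToXi ψ)

/-- `xiAux n ψ' m i` is the formula `ξ_i` (with `m = n + 1 - i` remaining steps). -/
def xiAux (n : ℕ) (ψ' : DForm (Fin 2)) : ℕ → ℕ → DForm (Fin 2)
  | 0, _ => ψ'
  | m+1, i =>
    if i % 2 = 1 then khat 1 (khat 0 (.and (xiBody n i) (xiAux n ψ' m (i+1))))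
    else .K 1 (.K 0 (dimp (xiBody n i) (xiAux n ψ' m (i+1))))

/-- The formula `ξ = [E_1,e_1]…[E_n,e_n]ξ_1`. -/
def xiFull (n : ℕ) (ψ : PropForm) : DForm (Fin 2) :=
  ((List.range n).map (fun j => twoEvt (j+1))).foldr (fun E acc => updSingle E 0 acc)
    (xiAux n (propToXi ψ) n 1)

/-- The initial model of the two-agent construction (z1-chains of lengths `1, …, n` for
the all-true assignment, z2-chains of lengths `1, …, n`). -/
def twoM (n : ℕ) : EpiModel (Fin 2) := groupModel2 n n (fun _ => true)

/-- The model `M' = M ⊗ E_1 ⊗ … ⊗ E_n` of the two-agent construction. -/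
def twoM' (n : ℕ) : EpiModel (Fin 2) :=
  ((List.range n).map (fun j => twoEvt (j+1))).foldl EpiModel.update (twoM n)

/-! ### The semi-private-announcement PSPACE-hardness construction. -/

/-- The semi-private announcement of `φ₁` versus `φ₂` to the agents `c` with `A c = true`:
two events with preconditions `φ₁` (designated, event `0`) and `φ₂`, empty postconditions,
related by `S_c` exactly for the agents `c` not in `A` (plus reflexive loops). -/
def semiPrivate {Agent : Type} [DecidableEq Agent] (φ₁ φ₂ : DForm Agent) (A : Agent → Bool) :
    EvtModel Agent where
  k := 1
  S c e f := decide (e = f) || !(A c)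
  pre e := if e = 0 then φ₁ else φ₂
  post _ := []

/-- The semi-private announcement `(E^1_i, f^1_i)`: `¬χ'_{i+n}` versus `¬χ'_{i+2n}`,
announced to agent `a`. -/
def spE1 (n i : ℕ) : EvtModel (Fin 2) :=
  semiPrivate (.neg (chiX' (i+n))) (.neg (chiX' (i+2*n))) (fun c => decide (c = 0))

/-- The semi-private announcement `(E^2_i, f^3_i)`: `⊤` versus
`(¬K̂_b χ'_{i+n} ∧ z_2) → ¬χ'_i`, announced to agent `b`. -/
def spE2 (n i : ℕ) : EvtModel (Fin 2) :=
  semiPrivate dtop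
    (dimp (.and (.neg (khat 1 (chiX' (i+n)))) (.atom 2)) (.neg (chiX' i)))
    (fun c => decide (c = 1))

/-- The semi-private announcement `(E^3_i, f^5_i)`: `⊤` versus
`((¬K̂_b χ'_{i+2n} ∧ z_2) → ¬χ'_i) ∧ ((¬K̂_a K̂_b χ'_{i+2n} ∧ z_1) → ¬χ_i)`,
announced to agent `b`. -/
def spE3 (n i : ℕ) : EvtModel (Fin 2) :=
  semiPrivate dtop
    (.and (dimp (.and (.neg (khat 1 (chiX' (i+2*n)))) (.atom 2)) (.neg (chiX' i)))
      (dimp (.and (.neg (khat 0 (khat 1 (chiX' (i+2*n))))) (.atom 1)) (.neg (chiX i))))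
    (fun c => decide (c = 1))

/-- The list of event models `E^1_1, E^2_1, E^3_1, …, E^1_n, E^2_n, E^3_n`. -/
def spList (n : ℕ) : List (EvtModel (Fin 2)) :=
  ((List.range n).map (fun j => [spE1 n (j+1), spE2 n (j+1), spE3 n (j+1)])).flatten

/-- `spXiAux n ψ' m i` is the formula `ξ_i` of the semi-private construction. -/
def spXiAux (n : ℕ) (ψ' : DForm (Fin 2)) : ℕ → ℕ → DForm (Fin 2)
  | 0, _ => ψ'
  | m+1, i =>
    if i % 2 = 1 then
      khat 1 (.and (negConj i) (khat 0 (.and (xiBody n i) (spXiAux n ψ' m (i+1)))))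
    else
      .K 1 (dimp (negConj i) (.K 0 (dimp (xiBody n i) (spXiAux n ψ' m (i+1)))))

/-- The formula `ξ = [E^1_1,f^1_1][E^2_1,f^3_1][E^3_1,f^5_1]…[E^3_n,f^5_n]ξ_1` of the
semi-private construction. -/
def spXiFull (n : ℕ) (ψ : PropForm) : DForm (Fin 2) :=
  (spList n).foldr (fun E acc => updSingle E 0 acc) (spXiAux n (propToXi ψ) n 1)

/-- The initial model of the semi-private construction (z1-chains of lengths `1, …, n`
for the all-true assignment, z2-chains of lengths `1, …, 3n`). -/
def spM (n : ℕ) : EpiModel (Fin 2) := groupModel2 n (3*n) (fun _ => true)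

/-- The model `M' = M ⊗ E^1_1 ⊗ E^2_1 ⊗ E^3_1 ⊗ … ⊗ E^3_n`. -/
def spM' (n : ℕ) : EpiModel (Fin 2) :=
  (spList n).foldl EpiModel.update (spM n)

/-!
Along the construction the accessibility relation stays total, and every world is either a copy
of `w₀`, with valuation `{z}`, or a world making `z` false; so each model is described by the set
of valuations of its `¬z`-worlds. The updates `E_1, …, E_n` produce all assignments to
`x_1, …, x_n`. In a total model `K̂_a (x_i ∧ φ)` holds everywhere or nowhere, so `E'_i` sets
`x_i` to one common value in all `¬z`-worlds. If these agree with the lexicographically maximal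
model `α` of `φ` on `x_1, …, x_{i-1}`, that value is `α(x_i)`: a model of `φ` with `x_i` true
agreeing with `α` before `i` would beat `α` unless `α(x_i)` is true, and conversely `α` itself,
cut down to `x_1, …, x_n`, is such a model.
-/

open Function Set

section Valuations

variable {Agent : Type}

open Classical in
noncomputable def EpiModel.valOf (M : EpiModel Agent) (w : M.World) : ℕ → Bool :=
  fun p => decide (M.val w p)

@[simp]
lemma EpiModel.valOf_eq_true {M : EpiModel Agent} {w : M.World} {p : ℕ} :
    M.valOf w p = true ↔ M.val w p := by
  simp [EpiModel.valOf]

@[simp]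
lemma EpiModel.valOf_eq_false {M : EpiModel Agent} {w : M.World} {p : ℕ} :
    M.valOf w p = false ↔ ¬ M.val w p := by
  simp [EpiModel.valOf]

def applyPost (l : List (ℕ × Bool)) (γ : ℕ → Bool) : ℕ → Bool :=
  fun p => (postEval l p).getD (γ p)

@[simp]
lemma applyPost_nil (γ : ℕ → Bool) : applyPost [] γ = γ := rfl

@[simp]
lemma applyPost_singleton (i : ℕ) (b : Bool) (γ : ℕ → Bool) :
    applyPost [(i, b)] γ = update γ i b := by
  funext p
  by_cases hp : p = i
  · subst hp; simp [applyPost, postEval]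
  · simp [applyPost, postEval, Ne.symm hp, update_of_ne hp]

lemma EpiModel.valOf_update (M : EpiModel Agent) (E : EvtModel Agent) (w : M.World)
    (e : Fin (E.k + 1)) (h : Sat M w (E.pre e)) :
    (M.update E).valOf ⟨(w, e), h⟩ = applyPost (E.post e) (M.valOf w) := by
  funext p
  refine Bool.eq_iff_iff.mpr (EpiModel.valOf_eq_true.trans ?_)
  show (match postEval (E.post e) p with | some b => b = true | none => M.val w p) ↔
    (postEval (E.post e) p).getD (M.valOf w p) = true
  cases postEval (E.post e) p <;> simp

lemma EpiModel.mem_range_valOf_update {M : EpiModel Agent} {E : EvtModel Agent}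
    {γ : ℕ → Bool} : γ ∈ range (M.update E).valOf ↔
      ∃ w e, Sat M w (E.pre e) ∧ applyPost (E.post e) (M.valOf w) = γ := by
  constructor
  · rintro ⟨⟨⟨w, e⟩, h⟩, rfl⟩
    exact ⟨w, e, h, (M.valOf_update E w e h).symm⟩
  · rintro ⟨w, e, h, rfl⟩
    exact ⟨_, M.valOf_update E w e h⟩

lemma EpiModel.range_valOf_update {M : EpiModel Agent} {E : EvtModel Agent}
    {P : Fin (E.k + 1) → (ℕ → Bool) → Prop} (hpre : ∀ e w, Sat M w (E.pre e) ↔ P e (M.valOf w)) :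
    range (M.update E).valOf =
      {γ' | ∃ e, ∃ γ ∈ range M.valOf, P e γ ∧ applyPost (E.post e) γ = γ'} := by
  ext γ'
  simp only [M.mem_range_valOf_update, hpre, exists_range_iff, mem_ofPred_eq]
  exact exists_comm

@[simp]
lemma sat_atom (M : EpiModel Agent) (w : M.World) (p : ℕ) :
    Sat M w (.atom p) ↔ M.valOf w p = true := by
  simp [Sat]

lemma sat_toDForm (M : EpiModel Agent) (w : M.World) (φ : PropForm) :
    Sat M w φ.toDForm ↔ φ.eval (M.valOf w) = true := by
  induction φ with
  | atom p => simp [PropForm.toDForm, PropForm.eval]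
  | neg φ ih => simp [PropForm.toDForm, Sat, PropForm.eval, ih]
  | and φ χ ih₁ ih₂ => simp [PropForm.toDForm, Sat, PropForm.eval, ih₁, ih₂]

lemma sat_khat_of_rel {M : EpiModel Agent} {a : Agent} (hfull : ∀ u v, M.rel a u v)
    (w : M.World) (φ : DForm Agent) : Sat M w (khat a φ) ↔ ∃ v, Sat M v φ := by
  simp only [khat, Sat, not_forall, not_not, exists_prop]
  exact ⟨fun ⟨v, _, hv⟩ => ⟨v, hv⟩, fun ⟨v, hv⟩ => ⟨v, hfull w v, hv⟩⟩

lemma EpiModel.rel_foldl_update {a : Agent} (L : List (EvtModel Agent))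
    (hL : ∀ E ∈ L, ∀ e f, E.S a e f = true) (M : EpiModel Agent)
    (hM : ∀ u v, M.rel a u v) : ∀ u v, (L.foldl EpiModel.update M).rel a u v := by
  induction L generalizing M with
  | nil => exact hM
  | cons E L ih =>
    exact ih (fun E' hE' => hL E' (.tail _ hE')) _
      fun u v => ⟨hM _ _, hL E (.head _) _ _⟩

end Valuations

lemma PropForm.eval_congr {s : Set ℕ} {γ δ : ℕ → Bool} (h : ∀ p ∈ s, γ p = δ p) :
    ∀ φ : PropForm, φ.atomsSub s → φ.eval γ = φ.eval δ
  | .atom p, hp => h p hp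
  | .neg φ, hp => by simp [PropForm.eval, eval_congr h φ hp]
  | .and φ χ, hp => by simp [PropForm.eval, eval_congr h φ hp.1, eval_congr h χ hp.2]

lemma List.foldl_map_range_succ {α β : Type*} (f : ℕ → α) (g : β → α → β) (b : β) (k : ℕ) :
    ((List.range (k + 1)).map f).foldl g b = g (((List.range k).map f).foldl g b) (f k) := by
  simp [List.range_succ]

lemma Fin.exists_fin_three {P : Fin 3 → Prop} : (∃ e, P e) ↔ P 0 ∨ P 1 ∨ P 2 :=
  ⟨fun ⟨e, he⟩ => by fin_cases e <;> simp_all, by rintro (h | h | h) <;> exact ⟨_, h⟩⟩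

def zOnly : ℕ → Bool := fun p => decide (p = 0)

lemma range_valOf_update_deltaE {M : EpiModel Unit} {S : Set (ℕ → Bool)} {i : ℕ}
    (hM : range M.valOf = insert zOnly S) (hS : ∀ γ ∈ S, γ 0 = false) :
    range (M.update (deltaE i)).valOf =
      insert zOnly (S ∪ (update · i true) '' S) := by
  rw [M.range_valOf_update (P := fun e γ => γ 0 = true ↔ (e : ℕ) = 0) fun e w => ?_, hM]
  · ext γ'
    simp only [deltaE, Nat.reduceAdd, Fin.exists_fin_three, Fin.isValue, Fin.reduceEq,
      ↓reduceIte, Fin.val_zero, Fin.val_one, Fin.val_two, applyPost_nil, applyPost_singleton,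
      mem_insert_iff, mem_ofPred_eq, mem_union, mem_image, or_and_right, exists_or, exists_eq_left]
    grind [zOnly]
  · fin_cases e <;> simp [deltaE, Sat]

lemma range_valOf_update_deltaE' {M : EpiModel Unit} {S : Set (ℕ → Bool)} {i : ℕ} {ψ : PropForm}
    {b : Bool} (hi : i ≠ 0) (hfull : ∀ u v, M.rel () u v) (hM : range M.valOf = insert zOnly S)
    (hS : ∀ γ ∈ S, γ 0 = false) (hb : b = true ↔ ∃ γ ∈ S, γ i = true ∧ ψ.eval γ = true) :
    range (M.update (deltaE' i ψ)).valOf = insert zOnly ((update · i b) '' S) := by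
  have hkhat : ∀ w, Sat M w (khat () (.and (.atom i) ψ.toDForm)) ↔ b = true := by
    intro w
    have : (∃ v, Sat M v (.and (.atom i) ψ.toDForm)) ↔
        ∃ γ ∈ insert zOnly S, γ i = true ∧ ψ.eval γ = true := by
      rw [← hM]; simp [Sat, sat_toDForm]
    simp [sat_khat_of_rel hfull, this, hb, zOnly, hi]
  rw [M.range_valOf_update (P := fun e γ =>
      if (e : ℕ) = 0 then γ 0 = true else γ 0 = false ∧ (b = true ↔ (e : ℕ) = 1)) fun e w => ?_, hM]
  · ext γ'
    simp only [deltaE', Nat.reduceAdd, Fin.exists_fin_three, Fin.isValue, Fin.reduceEq,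
      ↓reduceIte, Fin.val_zero, Fin.val_one, Fin.val_two, applyPost_nil, applyPost_singleton,
      mem_insert_iff, mem_ofPred_eq, mem_image, or_and_right, exists_or, exists_eq_left]
    cases b <;> grind [zOnly]
  · fin_cases e <;> simp [deltaE', Sat, hkhat]

lemma valOf_eq_zOnly {M : EpiModel Unit} {S : Set (ℕ → Bool)} (hM : range M.valOf = insert zOnly S)
    (hS : ∀ γ ∈ S, γ 0 = false) {w : M.World} (hw : M.val w 0) : M.valOf w = zOnly := by
  have hmem : M.valOf w ∈ insert zOnly S := hM ▸ mem_range_self w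
  refine hmem.resolve_right fun h => ?_
  simpa [hw] using hS _ h

lemma valOf_mem {M : EpiModel Unit} {S : Set (ℕ → Bool)} (hM : range M.valOf = insert zOnly S)
    {w : M.World} (hw : ¬ M.val w 0) : M.valOf w ∈ S := by
  have hmem : M.valOf w ∈ insert zOnly S := hM ▸ mem_range_self w
  refine hmem.resolve_left fun h => hw ?_
  simpa [zOnly] using congrFun h 0

def assignmentsOn (n : ℕ) : Set (ℕ → Bool) := {γ | ∀ p, γ p = true → 1 ≤ p ∧ p ≤ n}

lemma apply_zero_of_mem_assignmentsOn {n : ℕ} {γ : ℕ → Bool} (hγ : γ ∈ assignmentsOn n) :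
    γ 0 = false := by
  by_contra h
  simpa using hγ 0 (by simpa using h)

lemma assignmentsOn_zero : assignmentsOn 0 = {fun _ => false} := by
  ext γ
  simp only [assignmentsOn, mem_ofPred_eq, mem_singleton_iff]
  refine ⟨fun h => funext fun p => ?_, fun h p hp => by simp [h] at hp⟩
  by_contra hp
  have := h p (by simpa using hp)
  omega

lemma assignmentsOn_succ (k : ℕ) :
    assignmentsOn (k + 1) = assignmentsOn k ∪ (update · (k + 1) true) '' assignmentsOn k := by
  ext γ
  constructor
  · intro hγ
    by_cases hk : γ (k + 1) = true
    · refine .inr ⟨update γ (k + 1) false, fun p hp => ?_, by simp [← hk]⟩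
      have hpk : p ≠ k + 1 := by rintro rfl; simp at hp
      have := hγ p (by simpa [hpk] using hp)
      omega
    · refine .inl fun p hp => ?_
      have hpk : p ≠ k + 1 := by rintro rfl; exact hk hp
      have := hγ p hp
      omega
  · rintro (hγ | ⟨γ, hγ, rfl⟩) p hp
    · have := hγ p hp
      omega
    · by_cases hpk : p = k + 1
      · omega
      · have := hγ p (by simpa [hpk] using hp)
        omega

lemma range_valOf_deltaM : range deltaM.valOf = insert zOnly {fun _ => false} := by
  have h0 : deltaM.valOf (0 : Fin 2) = zOnly := by funext p; simp [deltaM, EpiModel.valOf, zOnly]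
  have h1 : deltaM.valOf (1 : Fin 2) = fun _ => false := by
    funext p; simp [deltaM, EpiModel.valOf]
  ext γ
  change (∃ w : Fin 2, deltaM.valOf w = γ) ↔ _
  simp [Fin.exists_fin_two, h0, h1, eq_comm]

lemma deltaM'_succ (n : ℕ) : deltaM' (n + 1) = (deltaM' n).update (deltaE (n + 1)) :=
  List.foldl_map_range_succ ..

lemma range_valOf_deltaM' (n : ℕ) : range (deltaM' n).valOf = insert zOnly (assignmentsOn n) := by
  induction n with
  | zero => rw [assignmentsOn_zero]; exact range_valOf_deltaM
  | succ n ih =>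
    rw [deltaM'_succ, range_valOf_update_deltaE ih fun _ => apply_zero_of_mem_assignmentsOn,
      assignmentsOn_succ]

lemma rel_deltaM' (n : ℕ) : ∀ u v, (deltaM' n).rel () u v :=
  EpiModel.rel_foldl_update _ (by simp [deltaE]) _ fun _ _ => trivial

/- The valuations of the `¬z`-worlds after `E'_1, …, E'_k`: the new value of `x_{k+1}` is the
truth value of `K̂_a (x_{k+1} ∧ φ)`. -/
open Classical in
noncomputable def stageVals (n : ℕ) (ψ : PropForm) : ℕ → Set (ℕ → Bool)
  | 0 => assignmentsOn n
  | k + 1 => (update · (k + 1)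
      (decide (∃ γ ∈ stageVals n ψ k, γ (k + 1) = true ∧ ψ.eval γ = true))) '' stageVals n ψ k

lemma apply_zero_of_mem_stageVals {n : ℕ} {ψ : PropForm} :
    ∀ {k : ℕ} {γ : ℕ → Bool}, γ ∈ stageVals n ψ k → γ 0 = false
  | 0, _, hγ => apply_zero_of_mem_assignmentsOn hγ
  | _ + 1, _, ⟨_, hγ, rfl⟩ => (update_of_ne (by omega) _ _).trans (apply_zero_of_mem_stageVals hγ)

open Classical in
lemma range_valOf_stage (n : ℕ) (ψ : PropForm) (k : ℕ) :
    range (((List.range k).map fun j => deltaE' (j + 1) ψ).foldl EpiModel.update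
      (deltaM' n)).valOf = insert zOnly (stageVals n ψ k) := by
  induction k with
  | zero => exact range_valOf_deltaM' n
  | succ k ih =>
    rw [List.foldl_map_range_succ]
    exact range_valOf_update_deltaE' (by omega)
      (EpiModel.rel_foldl_update _ (by simp [deltaE']) _ (rel_deltaM' n)) ih
      (fun _ => apply_zero_of_mem_stageVals) decide_eq_true_iff

def assignmentsAgreeing (n k : ℕ) (α : ℕ → Bool) : Set (ℕ → Bool) :=
  {γ | γ ∈ assignmentsOn n ∧ ∀ j ∈ Icc 1 k, γ j = α j}

section LexMax

variable {n k : ℕ} {ψ : PropForm} {α : ℕ → Bool}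

lemma exists_mem_assignmentsAgreeing_iff (hvars : ψ.atomsSub (Icc 1 n))
    (hα : IsLexMaxSat n ψ α) (hk : k < n) :
    (∃ γ ∈ assignmentsAgreeing n k α, γ (k + 1) = true ∧ ψ.eval γ = true) ↔ α (k + 1) = true := by
  constructor
  · rintro ⟨γ, ⟨-, hagree⟩, hγk, hψ⟩
    by_contra h
    exact hα.2 γ hψ ⟨k + 1, by omega, by omega, hγk, by simpa using h,
      fun j hj₁ hj₂ => hagree j ⟨hj₁, by omega⟩⟩
  · intro hαk
    let γ : ℕ → Bool := fun p => decide (p ∈ Icc 1 n) && α p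
    have hγα : ∀ p ∈ Icc 1 n, γ p = α p := fun p hp => by
      simp only [γ, decide_eq_true hp, Bool.true_and]
    have hγ : γ ∈ assignmentsOn n := fun p hp => by
      simp only [γ, Bool.and_eq_true, decide_eq_true_eq] at hp
      exact hp.1
    refine ⟨γ, ⟨hγ, fun j hj => hγα j ⟨hj.1, hj.2.trans hk.le⟩⟩, ?_, ?_⟩
    · rwa [hγα _ ⟨by omega, by omega⟩]
    · rw [PropForm.eval_congr hγα ψ hvars]
      exact hα.1

lemma image_update_assignmentsAgreeing (hk : k < n) :
    (update · (k + 1) (α (k + 1))) '' assignmentsAgreeing n k α =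
      assignmentsAgreeing n (k + 1) α := by
  ext γ
  constructor
  · rintro ⟨γ, ⟨hsupp, hagree⟩, rfl⟩
    refine ⟨fun p hp => ?_, fun j hj => ?_⟩
    · by_cases hpk : p = k + 1
      · omega
      · exact hsupp p (by simpa [hpk] using hp)
    · by_cases hjk : j = k + 1
      · simp [hjk]
      · dsimp only
        rw [update_of_ne hjk]
        exact hagree j ⟨hj.1, by have := hj.2; omega⟩
  · rintro ⟨hsupp, hagree⟩
    refine ⟨γ, ⟨hsupp, fun j hj => hagree j ⟨hj.1, hj.2.trans k.le_succ⟩⟩, ?_⟩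
    simpa using (hagree (k + 1) ⟨by omega, le_rfl⟩).symm

lemma stageVals_eq (hvars : ψ.atomsSub (Icc 1 n)) (hα : IsLexMaxSat n ψ α) :
    ∀ k ≤ n, stageVals n ψ k = assignmentsAgreeing n k α
  | 0, _ => by ext γ; simp [stageVals, assignmentsAgreeing]
  | k + 1, hk => by
    rw [stageVals, stageVals_eq hvars hα k (by omega),
      exists_mem_assignmentsAgreeing_iff hvars hα (by omega), Bool.decide_eq_true]
    exact image_update_assignmentsAgreeing (by omega)

end LexMax

theorem statement6_general (n : ℕ) (ψ : PropForm)
    (hvars : ψ.atomsSub (Set.Icc 1 n)) :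
    (∃ w : (deltaM'' n ψ).World, (deltaM'' n ψ).val w 0) ∧
    (∀ w : (deltaM'' n ψ).World, (deltaM'' n ψ).val w 0 →
      ∀ i, 1 ≤ i → i ≤ n → ¬ (deltaM'' n ψ).val w i) ∧
    (∀ v : (deltaM'' n ψ).World, ¬ (deltaM'' n ψ).val v 0 →
      ∀ α, IsLexMaxSat n ψ α → ∀ i, 1 ≤ i → i ≤ n →
        ((deltaM'' n ψ).val v i ↔ α i = true)) := by
  have hM : range (deltaM'' n ψ).valOf = insert zOnly (stageVals n ψ n) :=
    range_valOf_stage n ψ n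
  have hS : ∀ γ ∈ stageVals n ψ n, γ 0 = false := fun _ => apply_zero_of_mem_stageVals
  refine ⟨?_, fun w hw i hi _ => ?_, fun v hv α hα i hi hin => ?_⟩
  · obtain ⟨w, hw⟩ : zOnly ∈ range (deltaM'' n ψ).valOf := hM ▸ mem_insert _ _
    exact ⟨w, by simpa [zOnly] using congrFun hw 0⟩
  · simpa [zOnly, Nat.pos_iff_ne_zero.mp hi] using congrFun (valOf_eq_zOnly hM hS hw) i
  · have hv' := stageVals_eq hvars hα n le_rfl ▸ valOf_mem hM hv
    rw [← EpiModel.valOf_eq_true, hv'.2 i ⟨hi, hin⟩]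

/-- In the Δ₂ᵖ-hardness construction, with `ψ` a satisfiable
propositional formula over `x_1, …, x_n` and
`M'' = M ⊗ E_1 ⊗ … ⊗ E_n ⊗ E'_1 ⊗ … ⊗ E'_n`: the designated world (any world making `z`
true) makes all of `x_1, …, x_n` false, and every world making `z` false agrees on
`x_1, …, x_n` with the lexicographically maximal assignment satisfying `ψ`. -/
theorem statement6 (n : ℕ) (hn : 1 ≤ n) (ψ : PropForm)
    (hvars : ψ.atomsSub (Set.Icc 1 n)) (hsat : ∃ α, ψ.eval α = true) :
    (∃ w : (deltaM'' n ψ).World, (deltaM'' n ψ).val w 0) ∧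
    (∀ w : (deltaM'' n ψ).World, (deltaM'' n ψ).val w 0 →
      ∀ i, 1 ≤ i → i ≤ n → ¬ (deltaM'' n ψ).val w i) ∧
    (∀ v : (deltaM'' n ψ).World, ¬ (deltaM'' n ψ).val v 0 →
      ∀ α, IsLexMaxSat n ψ α → ∀ i, 1 ≤ i → i ≤ n →
        ((deltaM'' n ψ).val v i ↔ α i = true)) :=
  statement6_general n ψ hvars

end DELMC
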